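/- Blichfeldt's bound: the packing density of the unit ball satisfies δ(B^n) ≤ (n+2) · 2^{-(n+2)/2}. -/

import Mathlib

/-!
Blichfeldt's argument. Let the centres `cᵢ` of a packing of unit balls be pairwise at distance
at least `2`, and let `f₀(x) = max (1 - ‖x‖² / 2) 0`. For any `x`, the `k` centres with
`f₀(x - cᵢ) > 0` satisfy `4k(k - 1) ≤ ∑ᵢⱼ ‖cᵢ - cⱼ‖² ≤ 2k ∑ᵢ ‖x - cᵢ‖²`, hence
`∑ᵢ f₀(x - cᵢ) ≤ k - (k - 1) = 1`. Integrating this over a ball of radius `R + 3`, every ball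
of the packing that meets the ball of radius `R` contributes a full copy of
`∫ f₀ ≥ vol(Bⁿ) · 2^((n+2)/2) / (n+2)` (layer cake), which bounds the density by
`(n+2) · 2^(-(n+2)/2)`.
-/

open MeasureTheory
open scoped ENNReal

/-- A family of isometric copies `φ i '' K` forms a packing if the interiors of distinct
copies are pairwise disjoint. -/
def IsPacking {n : ℕ} (K : Set (EuclideanSpace ℝ (Fin n))) {ι : Type}
    (φ : ι → (EuclideanSpace ℝ (Fin n) ≃ᵢ EuclideanSpace ℝ (Fin n))) : Prop :=
  Pairwise fun i j => Disjoint (interior (φ i '' K)) (interior (φ j '' K))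

/-- The (upper) density of a packing. -/
noncomputable def packingUpperDensity {n : ℕ} (K : Set (EuclideanSpace ℝ (Fin n))) {ι : Type}
    (φ : ι → (EuclideanSpace ℝ (Fin n) ≃ᵢ EuclideanSpace ℝ (Fin n))) : ℝ≥0∞ :=
  Filter.limsup
    (fun R : ℝ => volume ((⋃ i, φ i '' K) ∩ Metric.closedBall 0 R) /
      volume (Metric.closedBall (0 : EuclideanSpace ℝ (Fin n)) R))
    Filter.atTop

/-- The packing density `δ(K)`. -/
noncomputable def packingDensity {n : ℕ} (K : Set (EuclideanSpace ℝ (Fin n))) : ℝ≥0∞ :=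
  ⨆ (ι : Type) (φ : ι → (EuclideanSpace ℝ (Fin n) ≃ᵢ EuclideanSpace ℝ (Fin n)))
    (_ : IsPacking K φ), packingUpperDensity K φ

open Metric Set Filter Topology Module
open scoped RealInnerProductSpace

section Gauge

variable {E : Type*} [SeminormedAddCommGroup E]

noncomputable def blichfeldtGauge (x : E) : ℝ := max (1 - ‖x‖ ^ 2 / 2) 0

theorem blichfeldtGauge_nonneg (x : E) : 0 ≤ blichfeldtGauge x := le_max_right _ _

theorem blichfeldtGauge_eq_zero_of_two_le_norm {x : E} (hx : 2 ≤ ‖x‖) :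
    blichfeldtGauge x = 0 := by
  rw [blichfeldtGauge, max_eq_right]
  nlinarith

@[fun_prop]
theorem continuous_blichfeldtGauge : Continuous (blichfeldtGauge : E → ℝ) := by
  unfold blichfeldtGauge
  fun_prop

end Gauge

section InnerProductSpace

variable {E : Type*} [NormedAddCommGroup E] [InnerProductSpace ℝ E]

theorem Finset.sum_sum_norm_sub_sq {ι : Type*} (s : Finset ι) (a : ι → E) :
    ∑ i ∈ s, ∑ j ∈ s, ‖a i - a j‖ ^ 2 =
      2 * s.card * ∑ i ∈ s, ‖a i‖ ^ 2 - 2 * ‖∑ i ∈ s, a i‖ ^ 2 := by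
  simp_rw [norm_sub_sq_real, Finset.sum_add_distrib, Finset.sum_sub_distrib, ← Finset.mul_sum,
    ← inner_sum, ← sum_inner, real_inner_self_eq_norm_sq, Finset.sum_const, nsmul_eq_mul,
    ← Finset.mul_sum]
  ring

theorem two_mul_card_sub_one_le_sum_norm_sq {ι : Type*} (s : Finset ι) {a : ι → E}
    (ha : ∀ i ∈ s, ∀ j ∈ s, i ≠ j → 2 ≤ ‖a i - a j‖) :
    2 * ((s.card : ℝ) - 1) ≤ ∑ i ∈ s, ‖a i‖ ^ 2 := by
  classical
  have hrow : ∀ i ∈ s, 4 * ((s.card : ℝ) - 1) ≤ ∑ j ∈ s, ‖a i - a j‖ ^ 2 := by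
    intro i hi
    rw [← Finset.sum_erase s (a := i) (by simp), ← Nat.cast_pred (Finset.card_pos.2 ⟨i, hi⟩),
      ← Finset.card_erase_of_mem hi, mul_comm, ← nsmul_eq_mul]
    refine Finset.card_nsmul_le_sum _ _ _ fun j hj => ?_
    have := ha i hi j (Finset.mem_of_mem_erase hj) (Finset.ne_of_mem_erase hj).symm
    nlinarith
  have hdouble := Finset.card_nsmul_le_sum _ _ _ hrow
  rw [Finset.sum_sum_norm_sub_sq, nsmul_eq_mul] at hdouble
  have := sq_nonneg ‖∑ i ∈ s, a i‖
  rcases s.eq_empty_or_nonempty with rfl | hs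
  · simp
  · have : (0 : ℝ) < s.card := by exact_mod_cast hs.card_pos
    nlinarith

theorem sum_blichfeldtGauge_sub_le_one {ι : Type*} {c : ι → E}
    (hc : Pairwise fun i j => 2 ≤ dist (c i) (c j)) (x : E) (s : Finset ι) :
    ∑ i ∈ s, blichfeldtGauge (x - c i) ≤ 1 := by
  classical
  set t := s.filter fun i => 0 < 1 - ‖x - c i‖ ^ 2 / 2
  have hsum : ∑ i ∈ s, blichfeldtGauge (x - c i) = ∑ i ∈ t, (1 - ‖x - c i‖ ^ 2 / 2) := by
    have hpos : ∀ i ∈ s, blichfeldtGauge (x - c i) ≠ 0 → 0 < 1 - ‖x - c i‖ ^ 2 / 2 :=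
      fun i _ h => by contrapose! h; exact max_eq_right h
    rw [← Finset.sum_filter_of_ne hpos]
    exact Finset.sum_congr rfl fun i hi => max_eq_left (Finset.mem_filter.1 hi).2.le
  have hsep : ∀ i ∈ t, ∀ j ∈ t, i ≠ j → 2 ≤ ‖(x - c i) - (x - c j)‖ := fun i _ j _ hij => by
    rw [sub_sub_sub_cancel_left, ← dist_eq_norm]
    exact hc hij.symm
  have := two_mul_card_sub_one_le_sum_norm_sq t hsep
  rw [hsum, Finset.sum_sub_distrib, ← Finset.sum_div, Finset.sum_const, nsmul_one]
  linarith

theorem tsum_ofReal_blichfeldtGauge_sub_le_one {ι : Type*} {c : ι → E}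
    (hc : Pairwise fun i j => 2 ≤ dist (c i) (c j)) (x : E) :
    ∑' i, ENNReal.ofReal (blichfeldtGauge (x - c i)) ≤ 1 := by
  rw [ENNReal.tsum_eq_iSup_sum]
  refine iSup_le fun s => ?_
  rw [← ENNReal.ofReal_sum_of_nonneg fun i _ => blichfeldtGauge_nonneg _, ← ENNReal.ofReal_one]
  exact ENNReal.ofReal_le_ofReal (sum_blichfeldtGauge_sub_le_one hc x s)

end InnerProductSpace

theorem integral_sqrt_two_mul_one_sub_pow (n : ℕ) :
    ∫ t in (0 : ℝ)..1, √(2 * (1 - t)) ^ n = 2 ^ (((n : ℝ) + 2) / 2) / ((n : ℝ) + 2) := by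
  have hn : (0 : ℝ) < (n : ℝ) / 2 + 1 := by positivity
  calc ∫ t in (0 : ℝ)..1, √(2 * (1 - t)) ^ n
      = ∫ t in (0 : ℝ)..1, 2 ^ ((n : ℝ) / 2) * (1 - t) ^ ((n : ℝ) / 2) := by
        refine intervalIntegral.integral_congr fun t ht => ?_
        rw [uIcc_of_le zero_le_one] at ht
        have ht1 : 0 ≤ 1 - t := by linarith [ht.2]
        rw [← Real.rpow_natCast, Real.sqrt_eq_rpow, ← Real.rpow_mul (by positivity),
          Real.mul_rpow zero_le_two ht1, one_div_mul_eq_div]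
    _ = 2 ^ ((n : ℝ) / 2) * ∫ t in (0 : ℝ)..1, t ^ ((n : ℝ) / 2) := by
        rw [intervalIntegral.integral_const_mul,
          intervalIntegral.integral_comp_sub_left (fun t => t ^ ((n : ℝ) / 2))]
        norm_num
    _ = 2 ^ (((n : ℝ) + 2) / 2) / ((n : ℝ) + 2) := by
        rw [integral_rpow (Or.inl (by linarith)), Real.one_rpow, Real.zero_rpow hn.ne',
          show ((n : ℝ) + 2) / 2 = (n : ℝ) / 2 + 1 by ring, Real.rpow_add_one two_ne_zero]
        field_simp
        ring

theorem countable_of_pairwise_two_le_dist {X ι : Type*} [PseudoMetricSpace X]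
    [TopologicalSpace.SeparableSpace X] {c : ι → X}
    (hc : Pairwise fun i j => 2 ≤ dist (c i) (c j)) : Countable ι :=
  Pairwise.countable_of_isOpen_disjoint (s := fun i => ball (c i) 1)
    (fun i j hij => ball_disjoint_ball (by linarith [hc hij])) (fun _ => isOpen_ball)
    (fun _ => nonempty_ball.2 one_pos)

theorem setLIntegral_closedBall_ofReal_blichfeldtGauge_sub {E : Type*} [NormedAddCommGroup E]
    [MeasurableSpace E] [BorelSpace E] (μ : Measure E) [μ.IsAddRightInvariant] {c : E} {R : ℝ}
    (hc : ‖c‖ ≤ R + 1) :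
    ∫⁻ x in closedBall 0 (R + 3), ENNReal.ofReal (blichfeldtGauge (x - c)) ∂μ =
      ∫⁻ x, ENNReal.ofReal (blichfeldtGauge x) ∂μ := by
  rw [← lintegral_sub_right_eq_self (fun x => ENNReal.ofReal (blichfeldtGauge x)) c]
  refine setLIntegral_eq_of_support_subset fun x hx => ?_
  by_contra hxR
  rw [mem_closedBall_zero_iff, not_le] at hxR
  refine hx ?_
  show ENNReal.ofReal (blichfeldtGauge (x - c)) = 0
  rw [blichfeldtGauge_eq_zero_of_two_le_norm, ENNReal.ofReal_zero]
  linarith [norm_sub_norm_le x c]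

section NormedSpace

variable {E : Type*} [NormedAddCommGroup E] [NormedSpace ℝ E] [FiniteDimensional ℝ E]
  [MeasurableSpace E] [BorelSpace E] (μ : Measure E) [μ.IsAddHaarMeasure]

theorem tendsto_measure_closedBall_add_div_measure_closedBall (a : ℝ) :
    Tendsto (fun R => μ (closedBall (0 : E) (R + a)) / μ (closedBall 0 R)) atTop (𝓝 1) := by
  have hratio :
      Tendsto (fun R : ℝ => ENNReal.ofReal (((R + a) / R) ^ finrank ℝ E)) atTop (𝓝 1) := by
    have h : Tendsto (fun R : ℝ => 1 + a / R) atTop (𝓝 1) := by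
      simpa using (tendsto_const_nhds.div_atTop tendsto_id).const_add (1 : ℝ)
    simpa using ENNReal.tendsto_ofReal ((h.congr' (eventually_ne_atTop 0 |>.mono
      fun R hR => by field_simp)).pow (finrank ℝ E))
  refine hratio.congr' ?_
  filter_upwards [eventually_gt_atTop 0, eventually_ge_atTop (-a)] with R hR hRa
  rw [Measure.addHaar_closedBall' μ 0 hR.le, Measure.addHaar_closedBall' μ 0 (by linarith),
    ENNReal.mul_div_mul_right _ _ (measure_closedBall_pos μ 0 one_pos).ne'
      measure_closedBall_lt_top.ne, div_pow, ENNReal.ofReal_div_of_pos (by positivity)]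

theorem limsup_div_measure_closedBall_le {f : ℝ → ℝ≥0∞} {C : ℝ≥0∞} (a : ℝ)
    (h : ∀ᶠ R in atTop, f R ≤ C * μ (closedBall 0 (R + a))) :
    limsup (fun R => f R / μ (closedBall 0 R)) atTop ≤ C :=
  calc limsup (fun R => f R / μ (closedBall 0 R)) atTop
      ≤ limsup (fun R => C * (μ (closedBall 0 (R + a)) / μ (closedBall 0 R))) atTop :=
        limsup_le_limsup <| h.mono fun R hR => by
          simpa only [mul_div_assoc] using ENNReal.div_le_div_right hR _
    _ = C := by
        have := ENNReal.Tendsto.const_mul (a := C)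
          (tendsto_measure_closedBall_add_div_measure_closedBall μ a) (Or.inl one_ne_zero)
        simpa using this.limsup_eq

end NormedSpace

section FiniteDimensional

variable {E : Type*} [NormedAddCommGroup E] [InnerProductSpace ℝ E] [FiniteDimensional ℝ E]
  [MeasurableSpace E] [BorelSpace E] (μ : Measure E) [μ.IsAddHaarMeasure]

theorem ofReal_mul_measure_closedBall_le_lintegral_blichfeldtGauge :
    ENNReal.ofReal (2 ^ (((finrank ℝ E : ℝ) + 2) / 2) / ((finrank ℝ E : ℝ) + 2)) *
        μ (closedBall 0 1) ≤ ∫⁻ x, ENNReal.ofReal (blichfeldtGauge x) ∂μ := by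
  set d := finrank ℝ E
  rw [lintegral_eq_lintegral_meas_le μ (ae_of_all _ blichfeldtGauge_nonneg)
    continuous_blichfeldtGauge.aemeasurable]
  have hint : IntegrableOn (fun t : ℝ => √(2 * (1 - t)) ^ d) (Ioc 0 1) :=
    (by fun_prop : Continuous fun t : ℝ => √(2 * (1 - t)) ^ d).integrableOn_Ioc
  calc ENNReal.ofReal (2 ^ (((d : ℝ) + 2) / 2) / ((d : ℝ) + 2)) * μ (closedBall 0 1)
      = ∫⁻ t in Ioc 0 1, μ (closedBall 0 √(2 * (1 - t))) := by
        simp_rw [Measure.addHaar_closedBall' μ _ (Real.sqrt_nonneg _)]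
        rw [lintegral_mul_const' _ _ measure_closedBall_lt_top.ne,
          ← ofReal_integral_eq_lintegral_ofReal hint (ae_of_all _ fun t => by positivity),
          ← intervalIntegral.integral_of_le zero_le_one, integral_sqrt_two_mul_one_sub_pow]
    _ ≤ ∫⁻ t in Ioc 0 1, μ {x | t ≤ blichfeldtGauge x} := by
        refine setLIntegral_mono' measurableSet_Ioc fun t ht => measure_mono fun x hx => ?_
        rw [mem_closedBall_zero_iff] at hx
        have hx2 : ‖x‖ ^ 2 ≤ 2 * (1 - t) :=
          (pow_le_pow_left₀ (norm_nonneg x) hx 2).trans_eq (Real.sq_sqrt (by linarith [ht.2]))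
        exact le_max_of_le_left (show t ≤ 1 - ‖x‖ ^ 2 / 2 by linarith)
    _ ≤ ∫⁻ t in Ioi 0, μ {x | t ≤ blichfeldtGauge x} := lintegral_mono_set Ioc_subset_Ioi_self

theorem measure_iUnion_closedBall_inter_closedBall_mul_lintegral_le {ι : Type*} {c : ι → E}
    (hc : Pairwise fun i j => 2 ≤ dist (c i) (c j)) (R : ℝ) :
    μ ((⋃ i, closedBall (c i) 1) ∩ closedBall 0 R) *
        ∫⁻ x, ENNReal.ofReal (blichfeldtGauge x) ∂μ ≤
      μ (closedBall 0 1) * μ (closedBall 0 (R + 3)) := by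
  have := countable_of_pairwise_two_le_dist hc
  set I := {i | ‖c i‖ ≤ R + 1}
  have hcover : (⋃ i, closedBall (c i) 1) ∩ closedBall 0 R ⊆ ⋃ i : I, closedBall (c i) 1 := by
    rintro x ⟨hx, hxR⟩
    obtain ⟨i, hxi⟩ := mem_iUnion.1 hx
    rw [mem_closedBall_zero_iff] at hxR
    have hi : ‖c i‖ ≤ R + 1 := by
      linarith [norm_sub_norm_le (c i) x, dist_eq_norm (c i) x ▸ mem_closedBall'.1 hxi]
    exact mem_iUnion.2 ⟨⟨i, hi⟩, hxi⟩
  calc μ ((⋃ i, closedBall (c i) 1) ∩ closedBall 0 R) *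
        ∫⁻ x, ENNReal.ofReal (blichfeldtGauge x) ∂μ
      ≤ (∑' i : I, μ (closedBall (c i) 1)) * ∫⁻ x, ENNReal.ofReal (blichfeldtGauge x) ∂μ := by
        gcongr
        exact (measure_mono hcover).trans (measure_iUnion_le _)
    _ = μ (closedBall 0 1) * ∑' i : I,
          ∫⁻ x in closedBall 0 (R + 3), ENNReal.ofReal (blichfeldtGauge (x - c i)) ∂μ := by
        simp_rw [Measure.addHaar_closedBall_center, ← ENNReal.tsum_mul_right,
          ← ENNReal.tsum_mul_left]
        exact tsum_congr fun i => by
          rw [setLIntegral_closedBall_ofReal_blichfeldtGauge_sub μ i.2]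
    _ = μ (closedBall 0 1) * ∫⁻ x in closedBall 0 (R + 3),
          ∑' i : I, ENNReal.ofReal (blichfeldtGauge (x - c i)) ∂μ := by
        rw [lintegral_tsum fun i => by fun_prop]
    _ ≤ μ (closedBall 0 1) * ∫⁻ _ in closedBall 0 (R + 3), 1 ∂μ := by
        gcongr with x
        exact tsum_ofReal_blichfeldtGauge_sub_le_one
          (hc.comp_of_injective Subtype.val_injective) x
    _ = μ (closedBall 0 1) * μ (closedBall 0 (R + 3)) := by rw [setLIntegral_one]

theorem measure_iUnion_closedBall_inter_closedBall_le {ι : Type*} {c : ι → E}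
    (hc : Pairwise fun i j => 2 ≤ dist (c i) (c j)) (R : ℝ) :
    μ ((⋃ i, closedBall (c i) 1) ∩ closedBall 0 R) ≤
      ENNReal.ofReal (((finrank ℝ E : ℝ) + 2) * 2 ^ (-(((finrank ℝ E : ℝ) + 2) / 2))) *
        μ (closedBall 0 (R + 3)) := by
  set d : ℝ := (finrank ℝ E : ℝ)
  set k : ℝ := 2 ^ ((d + 2) / 2) / (d + 2)
  have hk : 0 < k := by positivity
  have hV₀ : μ (closedBall 0 1) ≠ 0 := (measure_closedBall_pos μ 0 one_pos).ne'
  have hV : μ (closedBall 0 1) ≠ ⊤ := measure_closedBall_lt_top.ne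
  have hmul : μ (closedBall 0 1) * (μ ((⋃ i, closedBall (c i) 1) ∩ closedBall 0 R) *
      ENNReal.ofReal k) ≤ μ (closedBall 0 1) * μ (closedBall 0 (R + 3)) :=
    calc _ = μ ((⋃ i, closedBall (c i) 1) ∩ closedBall 0 R) *
          (ENNReal.ofReal k * μ (closedBall 0 1)) := by ring
      _ ≤ _ := (mul_le_mul_right
          (ofReal_mul_measure_closedBall_le_lintegral_blichfeldtGauge μ) _).trans
          (measure_iUnion_closedBall_inter_closedBall_mul_lintegral_le μ hc R)
  have hkinv : k⁻¹ = (d + 2) * 2 ^ (-((d + 2) / 2)) := by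
    rw [inv_div, Real.rpow_neg zero_le_two, div_eq_mul_inv]
  rw [← hkinv, ENNReal.ofReal_inv_of_pos hk, mul_comm, ← div_eq_mul_inv,
    ENNReal.le_div_iff_mul_le (Or.inl (by simpa using hk)) (Or.inl ENNReal.ofReal_ne_top)]
  exact (ENNReal.mul_le_mul_iff_right hV₀ hV).1 hmul

end FiniteDimensional

theorem IsPacking.two_mul_le_dist_apply_zero {n : ℕ} {ι : Type}
    {φ : ι → (EuclideanSpace ℝ (Fin n) ≃ᵢ EuclideanSpace ℝ (Fin n))} {r : ℝ} (hr : 0 < r)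
    (hφ : IsPacking (closedBall 0 r) φ) : Pairwise fun i j => 2 * r ≤ dist (φ i 0) (φ j 0) :=
  fun i j hij => by
    have : Disjoint (interior (φ i '' closedBall 0 r)) (interior (φ j '' closedBall 0 r)) :=
      hφ hij
    rw [(φ i).image_closedBall, (φ j).image_closedBall, interior_closedBall _ hr.ne',
      interior_closedBall _ hr.ne', disjoint_ball_ball_iff hr hr] at this
    linarith

theorem blichfeldt_ball_bound_general (n : ℕ) :
    packingDensity (Metric.closedBall (0 : EuclideanSpace ℝ (Fin n)) 1) ≤
      ENNReal.ofReal (((n : ℝ) + 2) * (2 : ℝ) ^ (-(((n : ℝ) + 2) / 2))) := by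
  unfold packingDensity packingUpperDensity
  refine iSup_le fun ι => iSup_le fun φ => iSup_le fun hφ => ?_
  have hc : Pairwise fun i j => 2 ≤ dist (φ i 0) (φ j 0) := by
    simpa using hφ.two_mul_le_dist_apply_zero one_pos
  refine limsup_div_measure_closedBall_le volume 3 (Eventually.of_forall fun R => ?_)
  simp only [(φ _).image_closedBall]
  simpa only [finrank_euclideanSpace_fin] using
    measure_iUnion_closedBall_inter_closedBall_le volume hc R

/-- Blichfeldt's bound: the packing density of the unit ball in `ℝⁿ` satisfies
`δ(Bⁿ) ≤ (n+2) · 2^{-(n+2)/2}`. -/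
theorem blichfeldt_ball_bound (n : ℕ) (hn : 1 ≤ n) :
    packingDensity (Metric.closedBall (0 : EuclideanSpace ℝ (Fin n)) 1) ≤
      ENNReal.ofReal (((n : ℝ) + 2) * (2 : ℝ) ^ (-(((n : ℝ) + 2) / 2))) :=
  blichfeldt_ball_bound_general n
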